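/- There exist constants C < ∞ and β > 0 (depending only on w) such that for all m ∈ ℕ and all y ∈ ℤ, Pᵐ(0,y) ≤ C·e^{−β|y|}, where Pᵐ denotes the m-step transition kernel. Moreover, for all n ∈ ℕ and y ∈ ℤ one has the bound Pⁿ(0,y) ≤ ρ(y)/ρ(0) = ∏_{z=1}^{⌊|2y+1|/2⌋} w(−z)/w(z). -/

import Mathlib

open MeasureTheory Filter
open scoped BigOperators ENNReal

noncomputable section

/-- `p(x) = w(-x)/(w(x)+w(-x))`. -/
def pfun (w : ℤ → ℝ) (x : ℤ) : ℝ := w (-x) / (w x + w (-x))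

/-- `q(x) = w(x)/(w(x)+w(-x))`. -/
def qfun (w : ℤ → ℝ) (x : ℤ) : ℝ := w x / (w x + w (-x))

/-- The Markov transition kernel `P(x,y)`. -/
def Pker (w : ℤ → ℝ) (x y : ℤ) : ℝ :=
  if x - 1 ≤ y then (∏ z ∈ Finset.Icc x y, pfun w z) * qfun w (y + 1) else 0

/-- The `m`-step transition kernel. -/
def Pm (w : ℤ → ℝ) : ℕ → ℤ → ℤ → ℝ
  | 0, x, y => if x = y then 1 else 0
  | m + 1, x, y => ∑' z : ℤ, Pm w m x z * Pker w z y

/-- The normalizing constant `Z`. -/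
def Zconst (w : ℤ → ℝ) : ℝ :=
  2 * ∑' x : ℕ, ∏ z ∈ Finset.Icc (1 : ℤ) (x : ℤ), w (-z) / w z

/-- The stationary distribution `ρ`. -/
def rho (w : ℤ → ℝ) (x : ℤ) : ℝ :=
  (Zconst w)⁻¹ * ∏ z ∈ Finset.Icc (1 : ℤ) (|2 * x + 1| / 2), w (-z) / w z

/-- The weight function `w` is positive, nondecreasing and satisfies
`lim_{z→∞} (w(z) - w(-z)) > 0`. -/
def GoodWeight (w : ℤ → ℝ) : Prop :=
  (∀ z, 0 < w z) ∧ (∀ z, w z ≤ w (z + 1)) ∧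
    ∃ c > (0 : ℝ), ∀ᶠ z : ℤ in atTop, c ≤ w z - w (-z)

/-- `η` is a Markov chain with (sub)stochastic kernel `K` started at `a`,
characterized through its cylinder probabilities. -/
def KChain {Ω : Type*} [MeasurableSpace Ω] (μ : Measure Ω)
    (K : ℤ → ℤ → ℝ) (η : ℕ → Ω → ℤ) (a : ℤ) : Prop :=
  (∀ n, Measurable (η n)) ∧
  ∀ (n : ℕ) (x : ℕ → ℤ),
    μ {ω | ∀ i ≤ n, η i ω = x i} =
      ENNReal.ofReal ((if x 0 = a then (1 : ℝ) else 0) *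
        ∏ i ∈ Finset.range n, K (x i) (x (i + 1)))

/-!
The balance relation `g(x) q(x) = g(x-1) p(x)` for `g = ρ/ρ(0)` makes `∑ₓ g(x) P(x,y)` telescope
to `g(y)`, provided `g` vanishes at `-∞`. So `g` is an invariant measure of `P`, and since
`P⁰(0,·) = δ₀ ≤ g`, induction gives `Pᵐ(0,·) ≤ g` for every `m`. Monotonicity of `w` and the
positive gap `w(z) - w(-z) ≥ c` make `w(-z)/w(z) ≤ r < 1` eventually, so `g` decays geometrically
in `|y|`; this gives the exponential bound, the vanishing at `-∞`, and `Z < ∞`.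
-/

open Topology

/-- `g = ρ/ρ(0)`, the stationary measure of `P` without the normalisation `Z`. -/
def stationaryWeight (w : ℤ → ℝ) (x : ℤ) : ℝ :=
  ∏ z ∈ Finset.Icc (1 : ℤ) (|2 * x + 1| / 2), w (-z) / w z

lemma Int.prod_Icc_add_one_right {M : Type*} [CommMonoid M] (f : ℤ → M) {a b : ℤ} (h : a ≤ b + 1) :
    ∏ z ∈ Finset.Icc a (b + 1), f z = (∏ z ∈ Finset.Icc a b, f z) * f (b + 1) := by
  rw [← Finset.insert_Icc_right_eq_Icc_add_one h, Finset.prod_insert (by simp), mul_comm]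

lemma hasSum_sub_add_one {f : ℕ → ℝ} {l : ℝ} (hf : ∀ n, f (n + 1) ≤ f n)
    (hl : Tendsto f atTop (𝓝 l)) : HasSum (fun n => f n - f (n + 1)) (f 0 - l) := by
  rw [hasSum_iff_tendsto_nat_of_nonneg (fun n => sub_nonneg.2 (hf n))]
  simp_rw [Finset.sum_range_sub']
  exact tendsto_const_nhds.sub hl

lemma exists_prod_Icc_le_mul_pow {f : ℤ → ℝ} {r : ℝ} (hr0 : 0 < r) (hr1 : r ≤ 1)
    (hf0 : ∀ z, 0 ≤ f z) (hf1 : ∀ z, 1 ≤ z → f z ≤ 1) (hfr : ∀ᶠ z in atTop, f z ≤ r) :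
    ∃ C, ∀ n : ℕ, ∏ z ∈ Finset.Icc (1 : ℤ) n, f z ≤ C * r ^ n := by
  obtain ⟨z₀, hz₀⟩ := eventually_atTop.1 hfr
  set N := z₀.toNat
  have hprod_le_one (n : ℕ) : ∏ z ∈ Finset.Icc (1 : ℤ) n, f z ≤ 1 :=
    Finset.prod_le_one (fun z _ => hf0 z) fun z hz => hf1 z (Finset.mem_Icc.1 hz).1
  have hrN : 0 < r ^ N := pow_pos hr0 N
  refine ⟨(r ^ N)⁻¹, fun n => ?_⟩
  rcases le_total n N with hn | hn
  · calc ∏ z ∈ Finset.Icc (1 : ℤ) n, f z ≤ (r ^ N)⁻¹ * r ^ N := by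
          rw [inv_mul_cancel₀ hrN.ne']; exact hprod_le_one n
      _ ≤ (r ^ N)⁻¹ * r ^ n :=
          mul_le_mul_of_nonneg_left (pow_le_pow_of_le_one hr0.le hr1 hn) (by positivity)
  induction n, hn using Nat.le_induction with
  | base => rw [inv_mul_cancel₀ hrN.ne']; exact hprod_le_one N
  | succ n hn ih =>
    rw [Nat.cast_succ, Int.prod_Icc_add_one_right f (by omega), pow_succ, ← mul_assoc]
    exact mul_le_mul ih (hz₀ _ (by omega)) (hf0 _) (by positivity)

section PositiveWeight

variable {w : ℤ → ℝ}

lemma pfun_nonneg (hpos : ∀ z, 0 < w z) (x : ℤ) : 0 ≤ pfun w x := by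
  unfold pfun; have := hpos x; have := hpos (-x); positivity

lemma qfun_nonneg (hpos : ∀ z, 0 < w z) (x : ℤ) : 0 ≤ qfun w x := by
  unfold qfun; have := hpos x; have := hpos (-x); positivity

lemma pfun_add_qfun (hpos : ∀ z, 0 < w z) (x : ℤ) : pfun w x + qfun w x = 1 := by
  rw [pfun, qfun, ← add_div, add_comm, div_self (by linarith [hpos x, hpos (-x)])]

lemma pfun_le_one (hpos : ∀ z, 0 < w z) (x : ℤ) : pfun w x ≤ 1 := by
  linarith [pfun_add_qfun hpos x, qfun_nonneg hpos x]

lemma Pker_nonneg (hpos : ∀ z, 0 < w z) (x y : ℤ) : 0 ≤ Pker w x y := by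
  unfold Pker
  split_ifs
  · exact mul_nonneg (Finset.prod_nonneg fun z _ => pfun_nonneg hpos z) (qfun_nonneg hpos _)
  · exact le_rfl

lemma Pm_nonneg (hpos : ∀ z, 0 < w z) : ∀ m x y, 0 ≤ Pm w m x y
  | 0, x, y => by rw [Pm]; split_ifs <;> norm_num
  | m + 1, x, y => tsum_nonneg fun z => mul_nonneg (Pm_nonneg hpos m x z) (Pker_nonneg hpos z y)

lemma stationaryWeight_pos (hpos : ∀ z, 0 < w z) (x : ℤ) : 0 < stationaryWeight w x :=
  Finset.prod_pos fun _ _ => div_pos (hpos _) (hpos _)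

lemma stationaryWeight_zero : stationaryWeight w 0 = 1 := by
  simp [stationaryWeight]

/-- On either side of `-1/2` the step `x ↦ x + 1` multiplies or divides `g` by one ratio
`w(-z)/w(z)`. -/
lemma stationaryWeight_add_one_mul (hpos : ∀ z, 0 < w z) (x : ℤ) :
    stationaryWeight w (x + 1) * w (x + 1) = stationaryWeight w x * w (-(x + 1)) := by
  have hw₁ := (hpos (x + 1)).ne'
  have hw₂ := (hpos (-(x + 1))).ne'
  unfold stationaryWeight
  rcases lt_trichotomy x (-1) with hx | rfl | hx
  · rw [show |2 * (x + 1) + 1| / 2 = -x - 2 by rw [Int.abs_eq_natAbs]; omega,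
      show |2 * x + 1| / 2 = -x - 2 + 1 by rw [Int.abs_eq_natAbs]; omega,
      Int.prod_Icc_add_one_right _ (by omega), show -x - 2 + 1 = -(x + 1) by ring, neg_neg]
    field_simp
  · simp
  · rw [show |2 * (x + 1) + 1| / 2 = x + 1 by rw [Int.abs_eq_natAbs]; omega,
      show |2 * x + 1| / 2 = x by rw [Int.abs_eq_natAbs]; omega,
      Int.prod_Icc_add_one_right _ (by omega)]
    field_simp

lemma stationaryWeight_mul_qfun (hpos : ∀ z, 0 < w z) (x : ℤ) :
    stationaryWeight w (x + 1) * qfun w (x + 1) = stationaryWeight w x * pfun w (x + 1) := by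
  rw [qfun, pfun, mul_div_assoc', mul_div_assoc', stationaryWeight_add_one_mul hpos]

/-- The telescoping step: with `T x = g (x-1) ∏_{z=x}^{y} p(z)` the left side is `T (x+1) - T x`,
by the balance relation `g(x) q(x) = g(x-1) p(x)` and `p + q = 1`. -/
lemma stationaryWeight_mul_prod_pfun (hpos : ∀ z, 0 < w z) {x y : ℤ} (h : x ≤ y) :
    stationaryWeight w x * ∏ z ∈ Finset.Icc x y, pfun w z =
      stationaryWeight w x * ∏ z ∈ Finset.Icc (x + 1) y, pfun w z -
        stationaryWeight w (x - 1) * ∏ z ∈ Finset.Icc x y, pfun w z := by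
  have hbalance := stationaryWeight_mul_qfun hpos (x - 1)
  rw [sub_add_cancel] at hbalance
  rw [← Finset.insert_Icc_add_one_left_eq_Icc h, Finset.prod_insert (by simp)]
  linear_combination (∏ z ∈ Finset.Icc (x + 1) y, pfun w z) *
    (stationaryWeight w x * pfun_add_qfun hpos x - hbalance)

lemma hasSum_stationaryWeight_mul_prod_pfun (hpos : ∀ z, 0 < w z)
    (hlim : Tendsto (stationaryWeight w) atBot (𝓝 0)) (y : ℤ) :
    HasSum (fun n : ℕ => stationaryWeight w (y - n) * ∏ z ∈ Finset.Icc (y - n) y, pfun w z)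
      (stationaryWeight w y) := by
  set T : ℕ → ℝ := fun n =>
    stationaryWeight w (y - n) * ∏ z ∈ Finset.Icc (y + 1 - n) y, pfun w z
  have hstep (n : ℕ) : T n - T (n + 1) =
      stationaryWeight w (y - n) * ∏ z ∈ Finset.Icc (y - n) y, pfun w z := by
    rw [stationaryWeight_mul_prod_pfun hpos (by omega)]
    simp only [T]; push_cast; ring_nf
  have hprod_nonneg (a : ℤ) : 0 ≤ ∏ z ∈ Finset.Icc a y, pfun w z :=
    Finset.prod_nonneg fun z _ => pfun_nonneg hpos z
  have hT_nonneg (n : ℕ) : 0 ≤ T n := mul_nonneg (stationaryWeight_pos hpos _).le (hprod_nonneg _)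
  have hT_le (n : ℕ) : T n ≤ stationaryWeight w (y - n) :=
    mul_le_of_le_one_right (stationaryWeight_pos hpos _).le
      (Finset.prod_le_one (fun z _ => pfun_nonneg hpos z) fun z _ => pfun_le_one hpos z)
  have hy_sub : Tendsto (fun n : ℕ => y - (n : ℤ)) atTop atBot :=
    tendsto_atTop_atBot.2 fun b => ⟨(y - b).toNat, fun n hn => by omega⟩
  have hT_lim : Tendsto T atTop (𝓝 0) :=
    squeeze_zero hT_nonneg hT_le (hlim.comp hy_sub)
  have hT_zero : T 0 = stationaryWeight w y := by simp [T]
  have hT_anti (n : ℕ) : T (n + 1) ≤ T n := by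
    rw [← sub_nonneg, hstep]
    exact mul_nonneg (stationaryWeight_pos hpos _).le (hprod_nonneg _)
  simpa only [hstep, hT_zero, sub_zero] using hasSum_sub_add_one hT_anti hT_lim

lemma hasSum_stationaryWeight_mul_Pker (hpos : ∀ z, 0 < w z)
    (hlim : Tendsto (stationaryWeight w) atBot (𝓝 0)) (y : ℤ) :
    HasSum (fun x => stationaryWeight w x * Pker w x y) (stationaryWeight w y) := by
  set e : ℕ → ℤ := fun k => y + 1 - k
  have he : Function.Injective e := fun a b hab => by simp only [e] at hab; omega
  have hsupp : ∀ x ∉ Set.range e, stationaryWeight w x * Pker w x y = 0 := by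
    intro x hx
    have hx' : y + 1 < x := by
      by_contra! h
      exact hx ⟨(y + 1 - x).toNat, by simp only [e]; omega⟩
    simp only [Pker, if_neg (show ¬(x - 1 ≤ y) by omega), mul_zero]
  have hterm (n : ℕ) : stationaryWeight w (e (n + 1)) * Pker w (e (n + 1)) y =
      stationaryWeight w (y - n) * (∏ z ∈ Finset.Icc (y - n) y, pfun w z) * qfun w (y + 1) := by
    rw [show e (n + 1) = y - n by simp only [e]; push_cast; ring, Pker,
      if_pos (show y - n - 1 ≤ y by omega), mul_assoc]
  have htop : stationaryWeight w (e 0) * Pker w (e 0) y = stationaryWeight w y * pfun w (y + 1) := by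
    rw [show e 0 = y + 1 by simp [e], Pker, if_pos (by omega),
      Finset.Icc_eq_empty (by omega), Finset.prod_empty, one_mul, stationaryWeight_mul_qfun hpos]
  rw [← he.hasSum_iff hsupp, ← hasSum_nat_add_iff' 1]
  simp only [Function.comp_apply, hterm, Finset.sum_range_one, htop]
  have hq : stationaryWeight w y * qfun w (y + 1) =
      stationaryWeight w y - stationaryWeight w y * pfun w (y + 1) := by
    linear_combination stationaryWeight w y * pfun_add_qfun hpos (y + 1)
  simpa only [hq] using
    (hasSum_stationaryWeight_mul_prod_pfun hpos hlim y).mul_right (qfun w (y + 1))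

lemma Pm_le_stationaryWeight (hpos : ∀ z, 0 < w z)
    (hlim : Tendsto (stationaryWeight w) atBot (𝓝 0)) (m : ℕ) (y : ℤ) :
    Pm w m 0 y ≤ stationaryWeight w y := by
  induction m generalizing y with
  | zero =>
    rw [Pm]
    split_ifs with h
    · rw [← h, stationaryWeight_zero]
    · exact (stationaryWeight_pos hpos y).le
  | succ m ih =>
    have hinv := hasSum_stationaryWeight_mul_Pker hpos hlim y
    have hle (x : ℤ) : Pm w m 0 x * Pker w x y ≤ stationaryWeight w x * Pker w x y :=
      mul_le_mul_of_nonneg_right (ih x) (Pker_nonneg hpos x y)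
    rw [Pm, ← hinv.tsum_eq]
    exact Summable.tsum_le_tsum hle
      (hinv.summable.of_nonneg_of_le
        (fun x => mul_nonneg (Pm_nonneg hpos m 0 x) (Pker_nonneg hpos x y)) hle)
      hinv.summable

end PositiveWeight

section GoodWeight

variable {w : ℤ → ℝ}

/-- Since `w(-z)` decreases while `w(z) - w(-z) ≥ c`, the ratio `w(-z)/w(z)` is eventually at most
`b/(b+c)` with `b = w(-z₀)`. -/
lemma GoodWeight.eventually_ratio_le (hw : GoodWeight w) :
    ∃ r, 0 < r ∧ r < 1 ∧ ∀ᶠ z in atTop, w (-z) / w z ≤ r := by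
  obtain ⟨hpos, hstep, c, hc, hev⟩ := hw
  obtain ⟨z₀, hz₀⟩ := eventually_atTop.1 hev
  have hb := hpos (-z₀)
  refine ⟨w (-z₀) / (w (-z₀) + c), by positivity, (div_lt_one (by positivity)).2 (by linarith),
    eventually_atTop.2 ⟨z₀, fun z hz => ?_⟩⟩
  have hgap := hz₀ z hz
  have hdecr : w (-z) ≤ w (-z₀) := monotone_int_of_le_succ hstep (by omega)
  have := hpos (-z)
  rw [div_le_div_iff₀ (by linarith) (by positivity)]
  nlinarith

lemma GoodWeight.exists_prod_ratio_le (hw : GoodWeight w) :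
    ∃ r, 0 < r ∧ r < 1 ∧ ∃ C, ∀ n : ℕ, ∏ z ∈ Finset.Icc (1 : ℤ) n, w (-z) / w z ≤ C * r ^ n := by
  obtain ⟨r, hr0, hr1, hratio⟩ := hw.eventually_ratio_le
  refine ⟨r, hr0, hr1, exists_prod_Icc_le_mul_pow hr0 hr1.le
    (fun z => (div_pos (hw.1 _) (hw.1 _)).le) (fun z hz => ?_) hratio⟩
  exact div_le_one_of_le₀ (monotone_int_of_le_succ hw.2.1 (by omega)) (hw.1 z).le

lemma GoodWeight.exists_stationaryWeight_le (hw : GoodWeight w) :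
    ∃ r, 0 < r ∧ r < 1 ∧ ∃ C, ∀ y : ℤ, stationaryWeight w y ≤ C * r ^ y.natAbs := by
  obtain ⟨r, hr0, hr1, C, hC⟩ := hw.exists_prod_ratio_le
  have hC0 : 0 ≤ C := zero_le_one.trans (by simpa using hC 0)
  refine ⟨r, hr0, hr1, C / r, fun y => ?_⟩
  have hk : |2 * y + 1| / 2 = ((2 * y + 1).natAbs / 2 : ℕ) := by rw [Int.abs_eq_natAbs]; omega
  calc stationaryWeight w y ≤ C * r ^ ((2 * y + 1).natAbs / 2) := by
        rw [stationaryWeight, hk]; exact hC _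
    _ = C / r * r ^ ((2 * y + 1).natAbs / 2 + 1) := by field_simp; ring
    _ ≤ C / r * r ^ y.natAbs := by
      have hexp : y.natAbs ≤ (2 * y + 1).natAbs / 2 + 1 := by omega
      exact mul_le_mul_of_nonneg_left (pow_le_pow_of_le_one hr0.le hr1.le hexp) (by positivity)

lemma GoodWeight.tendsto_stationaryWeight_atBot (hw : GoodWeight w) :
    Tendsto (stationaryWeight w) atBot (𝓝 0) := by
  obtain ⟨r, hr0, hr1, C, hC⟩ := hw.exists_stationaryWeight_le
  have hnatAbs : Tendsto Int.natAbs atBot atTop :=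
    tendsto_atBot_atTop.2 fun b => ⟨-b, fun y hy => by omega⟩
  have hbound : Tendsto (fun y : ℤ => C * r ^ y.natAbs) atBot (𝓝 0) := by
    simpa using ((tendsto_pow_atTop_nhds_zero_of_lt_one hr0.le hr1).comp hnatAbs).const_mul C
  exact squeeze_zero (fun y => (stationaryWeight_pos hw.1 y).le) hC hbound

lemma GoodWeight.Zconst_pos (hw : GoodWeight w) : 0 < Zconst w := by
  obtain ⟨r, hr0, hr1, C, hC⟩ := hw.exists_prod_ratio_le
  have hterm (n : ℕ) : 0 ≤ ∏ z ∈ Finset.Icc (1 : ℤ) n, w (-z) / w z :=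
    Finset.prod_nonneg fun _ _ => (div_pos (hw.1 _) (hw.1 _)).le
  have hsum : Summable fun n : ℕ => ∏ z ∈ Finset.Icc (1 : ℤ) n, w (-z) / w z :=
    ((summable_geometric_of_lt_one hr0.le hr1).mul_left C).of_nonneg_of_le hterm hC
  have hone : 1 ≤ ∑' n : ℕ, ∏ z ∈ Finset.Icc (1 : ℤ) n, w (-z) / w z := by
    simpa using hsum.le_tsum 0 fun n _ => hterm n
  rw [Zconst]
  linarith

lemma GoodWeight.rho_div_rho_zero (hw : GoodWeight w) (y : ℤ) :
    rho w y / rho w 0 = stationaryWeight w y := by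
  have hZ := (inv_pos.2 hw.Zconst_pos).ne'
  rw [rho, rho, ← stationaryWeight, ← stationaryWeight, stationaryWeight_zero, mul_one]
  exact mul_div_cancel_left₀ _ hZ

end GoodWeight

/-- uniform exponential tightness of `Pᵐ(0,·)`, and the bound
`Pⁿ(0,y) ≤ ρ(y)/ρ(0) = ∏_{z=1}^{⌊|2y+1|/2⌋} w(-z)/w(z)`. -/
theorem stmt_2 (w : ℤ → ℝ) (hw : GoodWeight w) :
    (∃ C : ℝ, ∃ β > (0 : ℝ), ∀ (m : ℕ) (y : ℤ),
      Pm w m 0 y ≤ C * Real.exp (-β * |(y : ℝ)|)) ∧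
    (∀ (n : ℕ) (y : ℤ),
      Pm w n 0 y ≤ rho w y / rho w 0 ∧
      rho w y / rho w 0 = ∏ z ∈ Finset.Icc (1 : ℤ) (|2 * y + 1| / 2), w (-z) / w z) := by
  have hPm := Pm_le_stationaryWeight hw.1 hw.tendsto_stationaryWeight_atBot
  obtain ⟨r, hr0, hr1, C, hC⟩ := hw.exists_stationaryWeight_le
  refine ⟨⟨C, -Real.log r, neg_pos.2 (Real.log_neg hr0 hr1), fun m y => ?_⟩,
    fun n y => ⟨hw.rho_div_rho_zero y ▸ hPm n y, hw.rho_div_rho_zero y⟩⟩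
  calc Pm w m 0 y ≤ C * r ^ y.natAbs := (hPm m y).trans (hC y)
    _ = C * Real.exp (-(-Real.log r) * |(y : ℝ)|) := by
      rw [neg_neg, ← Int.cast_abs, Int.abs_eq_natAbs, Int.cast_natCast,
        ← Real.rpow_def_of_pos hr0, Real.rpow_natCast]
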